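/- Let real numbers a_0, ..., a_n ≥ 1 and d_0 > d_1 > ... > d_n ≥ 0 and r_0, ..., r_n ≥ 0 satisfy: r_i ≤ d_i/2 + 1 for all i, d_{i−1} − d_i ≥ 2 for all i ≥ 1, h ≤ Σ_{i=0}^n a_i r_i, S ≥ 2a_0 d_0 + Σ_{i=1}^n a_i(d_{i−1} + d_i) − 2d_0, and 2a_0 + Σ_{i=1}^n a_i − 2 ≤ S/d_0. Then h ≤ (1/4 + 1/(2d_0))·S + d_0/2 + 1 (assuming d_0 ≥ 2). -/

import Mathlib

/-!
Since `r i ≤ d i / 2 + 1`, the weighted sum `∑ a i * r i` is at most `∑ a i * (d i / 2 + 1)`.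
For `i ≥ 1` the gap `d (i - 1) - d i ≥ 2` trades `a i * (d i / 2 + 1)` for
`a i * (d (i - 1) + d i) / 4 + a i / 2`, so the sum is bounded by a quarter of the lower bound
for `S` plus half of `2 a 0 + ∑ a i`, plus `d 0 / 2`. The assumed bound on `S / d 0` then turns
the second term into `S / (2 d 0) + 1`.
-/

open Finset

theorem Finset.sum_range_succ_eq_add_sum_Icc {M : Type*} [AddCommMonoid M] (f : ℕ → M) (n : ℕ) :
    ∑ i ∈ range (n + 1), f i = f 0 + ∑ i ∈ Icc 1 n, f i := by
  rw [range_eq_Ico, sum_eq_sum_Ico_succ_bot n.add_one_pos, zero_add, Ico_add_one_right_eq_Icc]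

theorem mul_half_add_one_le_of_two_le_sub {a x y : ℝ} (ha : 0 ≤ a) (hgap : 2 ≤ y - x) :
    a * (x / 2 + 1) ≤ a * (y + x) / 4 + a / 2 := by
  nlinarith [mul_nonneg ha (sub_nonneg.mpr hgap)]

theorem sum_mul_le_of_two_le_gap (n : ℕ) (a d r : ℕ → ℝ)
    (ha : ∀ i ≤ n, 0 ≤ a i)
    (hr : ∀ i ≤ n, r i ≤ d i / 2 + 1)
    (hgap : ∀ i, 1 ≤ i → i ≤ n → 2 ≤ d (i - 1) - d i) :
    ∑ i ∈ range (n + 1), a i * r i ≤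
      (2 * a 0 * d 0 + (∑ i ∈ Icc 1 n, a i * (d (i - 1) + d i)) - 2 * d 0) / 4
        + (2 * a 0 + ∑ i ∈ Icc 1 n, a i) / 2 + d 0 / 2 :=
  calc ∑ i ∈ range (n + 1), a i * r i
      ≤ ∑ i ∈ range (n + 1), a i * (d i / 2 + 1) := by
        refine sum_le_sum fun i hi => ?_
        have hin : i ≤ n := Nat.lt_succ_iff.mp (mem_range.mp hi)
        exact mul_le_mul_of_nonneg_left (hr i hin) (ha i hin)
    _ = a 0 * (d 0 / 2 + 1) + ∑ i ∈ Icc 1 n, a i * (d i / 2 + 1) :=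
        sum_range_succ_eq_add_sum_Icc _ n
    _ ≤ a 0 * (d 0 / 2 + 1) + ∑ i ∈ Icc 1 n, (a i * (d (i - 1) + d i) / 4 + a i / 2) := by
        gcongr with i hi
        obtain ⟨hi1, hin⟩ := mem_Icc.mp hi
        exact mul_half_add_one_le_of_two_le_sub (ha i hin) (hgap i hi1 hin)
    _ = _ := by
        rw [sum_add_distrib, ← sum_div, ← sum_div]
        ring

theorem numerical_core_general (n : ℕ) (a d r : ℕ → ℝ) (h S : ℝ)
    (ha : ∀ i ≤ n, 1 ≤ a i)
    (hr : ∀ i ≤ n, r i ≤ d i / 2 + 1)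
    (hgap : ∀ i, 1 ≤ i → i ≤ n → 2 ≤ d (i - 1) - d i)
    (hh : h ≤ ∑ i ∈ Finset.range (n + 1), a i * r i)
    (hS : 2 * a 0 * d 0 + (∑ i ∈ Finset.Icc 1 n, a i * (d (i - 1) + d i)) - 2 * d 0 ≤ S)
    (hsum : 2 * a 0 + (∑ i ∈ Finset.Icc 1 n, a i) - 2 ≤ S / d 0)
    (hd0 : 2 ≤ d 0) :
    h ≤ (1/4 + 1/(2 * d 0)) * S + d 0 / 2 + 1 := by
  have hweighted := sum_mul_le_of_two_le_gap n a d r (fun i hi => zero_le_one.trans (ha i hi))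
    hr hgap
  have hcoeff : (1/4 + 1/(2 * d 0)) * S = S / 4 + S / d 0 / 2 := by
    field_simp [(by linarith : d 0 ≠ 0)]
  rw [hcoeff]
  linarith

/-- the numerical core of the relative Noether inequality in the
hyperelliptic even-degree case. -/
theorem numerical_core (n : ℕ) (a d r : ℕ → ℝ) (h S : ℝ)
    (ha : ∀ i ≤ n, 1 ≤ a i)
    (hdec : ∀ i, 1 ≤ i → i ≤ n → d i < d (i - 1))
    (hdn : 0 ≤ d n)
    (hr0 : ∀ i ≤ n, 0 ≤ r i)
    (hr : ∀ i ≤ n, r i ≤ d i / 2 + 1)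
    (hgap : ∀ i, 1 ≤ i → i ≤ n → 2 ≤ d (i - 1) - d i)
    (hh : h ≤ ∑ i ∈ Finset.range (n + 1), a i * r i)
    (hS : 2 * a 0 * d 0 + (∑ i ∈ Finset.Icc 1 n, a i * (d (i - 1) + d i)) - 2 * d 0 ≤ S)
    (hsum : 2 * a 0 + (∑ i ∈ Finset.Icc 1 n, a i) - 2 ≤ S / d 0)
    (hd0 : 2 ≤ d 0) :
    h ≤ (1/4 + 1/(2 * d 0)) * S + d 0 / 2 + 1 :=
  numerical_core_general n a d r h S ha hr hgap hh hS hsum hd0
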